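/- Fix p, q ∈ ℝ. The point (p, q) is the unique singular point of Beloch's curve: the only pair (x,y) ∈ ℝ² satisfying simultaneously F(x,y) = 0, ∂F/∂x(x,y) = 0 and ∂F/∂y(x,y) = 0 is (x,y) = (p,q). Here ∂F/∂x = (q+y)(q−y) + (p−x)(p+3x) and ∂F/∂y = −4(q−y) + 2y(p−x). -/
import Mathlib


/-- Beloch's polynomial `F(x,y)` associated with `P = (p,q)`. -/
def belochF (p q x y : ℝ) : ℝ :=
  2 * (q - y) ^ 2 - (q + y) * (q - y) * (p - x) - (p - x) ^ 2 * (p + x)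

/-- The first partial derivative `∂F/∂x = (q+y)(q−y) + (p−x)(p+3x)`. -/
def belochFx (p q x y : ℝ) : ℝ :=
  (q + y) * (q - y) + (p - x) * (p + 3 * x)

/-- The first partial derivative `∂F/∂y = −4(q−y) + 2y(p−x)`. -/
def belochFy (p q x y : ℝ) : ℝ :=
  -4 * (q - y) + 2 * y * (p - x)

/-- `(p,q)` is the unique singular point of Beloch's curve: the only `(x,y)`
with `F(x,y) = ∂F/∂x(x,y) = ∂F/∂y(x,y) = 0` is `(x,y) = (p,q)`. -/
theorem stmt_7 (p q x y : ℝ) :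
    (belochF p q x y = 0 ∧ belochFx p q x y = 0 ∧ belochFy p q x y = 0) ↔
      (x, y) = (p, q) := by
  simp only [belochF, belochFx, belochFy, Prod.mk.injEq]
  constructor
  · rintro ⟨hF, hFx, hFy⟩
    by_cases h : p - x = 0
    · have hx : x = p := by linarith
      have hy : y = q := by
        rw [h] at hFy; nlinarith
      exact ⟨hx, hy⟩
    · exfalso
      have e1 : (p - x) ^ 2 * (q * y + 2 * p + 2 * x) = 0 := by
        linear_combination (-2 : ℝ) * hF -
          ((2 * (q - y) - q * (p - x)) / 2) * hFy
      have e2 : (p - x) * ((q + y) * y + 2 * p + 6 * x) = 0 := by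
        linear_combination (2 : ℝ) * hFx + ((q + y) / 2) * hFy
      have h2 : (p - x) ^ 2 ≠ 0 := pow_ne_zero _ h
      have e1' : q * y + 2 * p + 2 * x = 0 :=
        by rcases mul_eq_zero.mp e1 with h' | h' <;> [exact absurd h' h2; exact h']
      have e2' : (q + y) * y + 2 * p + 6 * x = 0 :=
        by rcases mul_eq_zero.mp e2 with h' | h' <;> [exact absurd h' h; exact h']
      have hy2 : y ^ 2 = -4 * x := by nlinarith
      have hv : 2 * (q - y) = y * (p - x) := by linarith
      have key : 2 * (q * y) = 2 * y ^ 2 + p * y ^ 2 - x * y ^ 2 := by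
        linear_combination y * hv
      have hfin : (x - p) * (1 - x) = 0 := by nlinarith
      have hx1 : 1 - x ≥ 1 := by nlinarith [sq_nonneg y]
      rcases mul_eq_zero.mp hfin with h' | h'
      · exact h (by linarith)
      · linarith
  · rintro ⟨hx, hy⟩
    subst hx; subst hy
    refine ⟨by ring, by ring, by ring⟩
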